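/- Gap between the posterior mean and the cutoff (ternary case): there exists a universal constant C_l > 0 such that for every ε > 0, every x ≠ 0, every m ∈ [-1, 1] with x·m ≠ 0, and every message a ∈ {-1, 1}, letting Z = E[z' | z' > -x·m + ε] if a = 1 and Z = E[z' | z' < -x·m - ε] if a = -1 (truncated standard normal means): (i) if sgn(x·m)·a < 0 then C_l · min{1, 1/|x|} < a·(Z + x·m); and (ii) if sgn(x·m)·a > 0 then C_l < a·(Z + x·m). -/

import Mathlib

open MeasureTheory ProbabilityTheory Set
open Filter Topology Real

noncomputable section

/-- Standard normal density. -/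
def stdPdf (z : ℝ) : ℝ := Real.exp (-z ^ 2 / 2) / Real.sqrt (2 * Real.pi)

/-- Standard normal cdf. -/
def stdCdf (c : ℝ) : ℝ := ∫ z in Set.Iio c, stdPdf z

/-- Mean of a standard normal truncated to `(c, ∞)`. -/
def truncMeanAbove (c : ℝ) : ℝ :=
  (∫ z in Set.Ioi c, z * stdPdf z) / (∫ z in Set.Ioi c, stdPdf z)

/-- Mean of a standard normal truncated to `(-∞, c)`. -/
def truncMeanBelow (c : ℝ) : ℝ :=
  (∫ z in Set.Iio c, z * stdPdf z) / (∫ z in Set.Iio c, stdPdf z)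

/-- Mean of a standard normal truncated to `(a, b)`. -/
def truncMeanBetween (a b : ℝ) : ℝ :=
  (∫ z in Set.Ioo a b, z * stdPdf z) / (∫ z in Set.Ioo a b, stdPdf z)

/-- Signum, with the (measure-zero) value at `0` set to `-1`. -/
def sgn (x : ℝ) : ℝ := if 0 < x then 1 else -1

/-- The standard normal measure on `ℝ`. -/
def stdNormal : Measure ℝ := gaussianReal 0 1

/-- The joint law of two independent standard normals. -/
def stdNormal2 : Measure (ℝ × ℝ) := stdNormal.prod stdNormal

/-- Uniform measure on `[-1, 1]` (the prior on the state θ). -/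
def uniformState : Measure ℝ := (2 : ENNReal)⁻¹ • volume.restrict (Set.Icc (-1 : ℝ) 1)

instance : IsProbabilityMeasure stdNormal := by unfold stdNormal; infer_instance
instance : IsProbabilityMeasure stdNormal2 := by unfold stdNormal2; infer_instance

lemma stdPdf_pos (z : ℝ) : 0 < stdPdf z :=
  div_pos (Real.exp_pos _) (Real.sqrt_pos.2 (by positivity))

lemma stdPdf_neg (z : ℝ) : stdPdf (-z) = stdPdf z := by simp [stdPdf]

lemma stdPdf_eq (z : ℝ) : stdPdf z = (Real.sqrt (2 * Real.pi))⁻¹ * Real.exp (-(2⁻¹ : ℝ) * z ^ 2) := by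
  rw [stdPdf, div_eq_inv_mul]; ring_nf

lemma integrable_stdPdf : Integrable stdPdf := by
  have := (integrable_exp_neg_mul_sq (by norm_num : (0:ℝ) < 2⁻¹)).const_mul (Real.sqrt (2 * Real.pi))⁻¹
  exact this.congr (by filter_upwards with x; rw [stdPdf_eq])

lemma integrable_id_stdPdf : Integrable (fun z => z * stdPdf z) := by
  have := (integrable_mul_exp_neg_mul_sq (by norm_num : (0:ℝ) < 2⁻¹)).const_mul (Real.sqrt (2 * Real.pi))⁻¹
  exact this.congr (by filter_upwards with x; rw [stdPdf_eq]; ring)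

lemma integral_stdPdf : ∫ z, stdPdf z = 1 := by
  have h : ∫ z : ℝ, Real.exp (-(2⁻¹:ℝ) * z ^ 2) = Real.sqrt (π / 2⁻¹) := integral_gaussian 2⁻¹
  have h2 : (π / 2⁻¹ : ℝ) = 2 * π := by ring
  simp only [funext stdPdf_eq]
  rw [integral_const_mul, h, h2, inv_mul_cancel₀]
  positivity

lemma hasDerivAt_negStdPdf (z : ℝ) : HasDerivAt (fun z => -stdPdf z) (z * stdPdf z) z := by
  have h1 : HasDerivAt (fun z : ℝ => -z ^ 2 / 2) (-z) z := by
    have h := ((hasDerivAt_pow 2 z).neg).div_const 2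
    refine h.congr_deriv ?_
    push_cast
    ring
  have h2 := (h1.exp).div_const (Real.sqrt (2 * Real.pi))
  have h3 := h2.neg
  have e : z * stdPdf z = -(Real.exp (-z ^ 2 / 2) * -z / Real.sqrt (2 * Real.pi)) := by
    simp only [stdPdf]; ring
  rw [e]
  exact h3

lemma tendsto_stdPdf_atTop : Tendsto (fun z => -stdPdf z) atTop (𝓝 0) := by
  rw [show (0:ℝ) = -0 by ring]
  apply Tendsto.neg
  rw [show (0:ℝ) = 0 / Real.sqrt (2 * Real.pi) by ring]
  apply Tendsto.div_const
  apply Real.tendsto_exp_atBot.comp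
  have : Tendsto (fun z : ℝ => z ^ 2 / 2) atTop atTop :=
    (tendsto_pow_atTop (two_ne_zero)).atTop_div_const (by norm_num)
  have h2 := tendsto_neg_atTop_atBot.comp this
  apply h2.congr
  intro z
  simp [Function.comp, neg_div]

lemma momentIoi (t : ℝ) : ∫ z in Ioi t, z * stdPdf z = stdPdf t := by
  have h := integral_Ioi_of_hasDerivAt_of_tendsto' (a := t) (m := 0)
    (f := fun z => -stdPdf z) (f' := fun z => z * stdPdf z)
    (fun x _ => hasDerivAt_negStdPdf x)
    integrable_id_stdPdf.integrableOn tendsto_stdPdf_atTop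
  simpa using h

lemma momentIio (t : ℝ) : ∫ z in Iio t, z * stdPdf z = -stdPdf t := by
  have h := integral_comp_neg_Ioi (-t) (fun z => z * stdPdf z)
  simp only [neg_neg] at h
  rw [integral_Iic_eq_integral_Iio] at h
  rw [← h]
  have e : ∀ x : ℝ, -x * stdPdf (-x) = -(x * stdPdf x) := by
    intro x; rw [stdPdf_neg]; ring
  simp only [e]
  rw [integral_neg, momentIoi, stdPdf_neg]

lemma cdf_symm (t : ℝ) : ∫ z in Iio (-t), stdPdf z = ∫ z in Ioi t, stdPdf z := by
  have h := integral_comp_neg_Ioi t stdPdf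
  simp only [stdPdf_neg] at h
  rw [integral_Iic_eq_integral_Iio] at h
  exact h.symm

lemma Gt_pos (t : ℝ) : 0 < ∫ z in Ioi t, stdPdf z := by
  rw [setIntegral_pos_iff_support_of_nonneg_ae
    (by filter_upwards with x using (stdPdf_pos x).le) integrable_stdPdf.integrableOn]
  have : Function.support stdPdf = univ := by
    ext x; simp [Function.mem_support, (stdPdf_pos x).ne']
  rw [this, univ_inter]
  simp [Real.volume_Ioi]

lemma Gt_le_one (t : ℝ) : ∫ z in Ioi t, stdPdf z ≤ 1 := by
  rw [← integral_stdPdf]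
  exact setIntegral_le_integral integrable_stdPdf
    (by filter_upwards with x using (stdPdf_pos x).le)

lemma integral_exp_decay (t b : ℝ) (hb : 0 < b) :
    ∫ z in Ioi t, Real.exp (-b * (z - t)) = 1 / b := by
  have h := integral_Ioi_of_hasDerivAt_of_tendsto' (a := t) (m := 0)
    (f := fun z => -(Real.exp (-b * (z - t)) / b))
    (f' := fun z => Real.exp (-b * (z - t)))
    (fun x _ => by
      have h1 : HasDerivAt (fun z : ℝ => -b * (z - t)) (-b) x :=
        ((hasDerivAt_id x).sub_const t).const_mul (-b) |>.congr_deriv (by ring)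
      have h2 := ((h1.exp).div_const b).neg
      convert h2 using 1
      · ext z; simp [neg_mul]
      field_simp)
    ?_ ?_
  · rw [h]; simp [hb.ne']
  · have : IntegrableOn (fun z => Real.exp (b * t) * Real.exp (-b * z)) (Ioi t) :=
      ((exp_neg_integrableOn_Ioi t hb).const_mul _)
    apply this.congr_fun ?_ measurableSet_Ioi
    intro x _
    show Real.exp (b * t) * Real.exp (-b * x) = Real.exp (-b * (x - t))
    rw [← Real.exp_add]
    ring_nf
  · rw [show (0:ℝ) = -(0 / b) by simp]
    apply Tendsto.neg
    apply Tendsto.div_const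
    apply Real.tendsto_exp_atBot.comp
    have hz : Tendsto (fun z : ℝ => z - t) atTop atTop := by
      simpa [sub_eq_add_neg] using tendsto_atTop_add_const_right atTop (-t) (tendsto_id (α := ℝ))
    exact (tendsto_const_mul_atBot_of_neg (neg_lt_zero.2 hb)).2 hz

lemma integrableOn_exp_decay (t b : ℝ) (hb : 0 < b) :
    IntegrableOn (fun z => Real.exp (-b * (z - t))) (Ioi t) := by
  have h : IntegrableOn (fun z => Real.exp (b * t) * Real.exp (-b * z)) (Ioi t) :=
    ((exp_neg_integrableOn_Ioi t hb).const_mul _)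
  apply h.congr_fun ?_ measurableSet_Ioi
  intro x _
  show Real.exp (b * t) * Real.exp (-b * x) = Real.exp (-b * (x - t))
  rw [← Real.exp_add]; ring_nf

lemma main_bound {t l : ℝ} (hl : 0 < l) (htl : 0 < t + l) :
    (t + l) * ∫ z in Ioi t, stdPdf z ≤ stdPdf t * Real.exp (l ^ 2 / 2) := by
  have key : ∀ z ∈ Ioi t,
      stdPdf z ≤ stdPdf t * Real.exp (l ^ 2 / 2) * Real.exp (-(t + l) * (z - t)) := by
    intro z _
    simp only [stdPdf]
    rw [div_mul_eq_mul_div, div_mul_eq_mul_div, div_le_div_iff_of_pos_right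
      (Real.sqrt_pos.2 (by positivity))]
    rw [← Real.exp_add, ← Real.exp_add]
    apply Real.exp_le_exp.2
    nlinarith [sq_nonneg (z - t - l)]
  have hInt : ∫ z in Ioi t, stdPdf z ≤
      ∫ z in Ioi t, stdPdf t * Real.exp (l ^ 2 / 2) * Real.exp (-(t + l) * (z - t)) := by
    apply setIntegral_mono_on integrable_stdPdf.integrableOn
      ((integrableOn_exp_decay t (t + l) htl).const_mul _) measurableSet_Ioi key
  rw [integral_const_mul, integral_exp_decay t (t + l) htl] at hInt
  calc (t + l) * ∫ z in Ioi t, stdPdf z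
      ≤ (t + l) * (stdPdf t * Real.exp (l ^ 2 / 2) * (1 / (t + l))) := by
        apply mul_le_mul_of_nonneg_left hInt htl.le
    _ = stdPdf t * Real.exp (l ^ 2 / 2) := by field_simp

def Mi (t : ℝ) : ℝ := stdPdf t / ∫ z in Ioi t, stdPdf z

lemma Mi_pos (t : ℝ) : 0 < Mi t := div_pos (stdPdf_pos t) (Gt_pos t)

lemma key_bound {t : ℝ} (ht : 0 < t) : t + 5/16 * min 1 (1/t) ≤ Mi t := by
  have hmax : (0:ℝ) < max 1 t := lt_of_lt_of_le one_pos (le_max_left _ _)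
  set l : ℝ := 1 / (2 * max 1 t) with hldef
  have hl : 0 < l := by positivity
  have hl2 : l ≤ 1/2 := by
    rw [hldef]
    rw [div_le_div_iff₀ (by positivity) (by norm_num)]
    nlinarith [le_max_left 1 t]
  have hlmax : l * max 1 t = 1/2 := by
    rw [hldef]; field_simp
  have hlt : l * t ≤ 1/2 := by
    calc l * t ≤ l * max 1 t := mul_le_mul_of_nonneg_left (le_max_right 1 t) hl.le
    _ = 1/2 := hlmax
  have hml : min 1 (1/t) = 1 / max 1 t := by
    rcases le_total t 1 with h | h
    · rw [max_eq_left h, min_eq_left]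
      · norm_num
      · rw [le_div_iff₀ ht]; linarith
    · rw [max_eq_right h, min_eq_right]
      rw [div_le_one ht]; linarith
  have hmain := main_bound hl (by positivity : 0 < t + l)
  -- (t + 5/8 * l) ≤ (t + l) * exp (-(l^2/2))
  have hexp : 1 - l^2/2 ≤ Real.exp (-(l^2/2)) := by
    have := Real.add_one_le_exp (-(l^2/2)); linarith
  have hstep : t + 5/8 * l ≤ (t + l) * Real.exp (-(l^2/2)) := by
    have h1 : t + 5/8 * l ≤ (t + l) * (1 - l^2/2) := by nlinarith
    have h2 : (t + l) * (1 - l^2/2) ≤ (t + l) * Real.exp (-(l^2/2)) :=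
      mul_le_mul_of_nonneg_left hexp (by positivity)
    linarith
  have hG := Gt_pos t
  rw [show (5:ℝ)/16 * min 1 (1/t) = 5/8 * l by rw [hml, hldef]; field_simp; ring]
  rw [Mi, le_div_iff₀ hG]
  calc (t + 5/8 * l) * ∫ z in Ioi t, stdPdf z
      ≤ ((t + l) * Real.exp (-(l^2/2))) * ∫ z in Ioi t, stdPdf z :=
        mul_le_mul_of_nonneg_right hstep hG.le
    _ = ((t + l) * ∫ z in Ioi t, stdPdf z) * Real.exp (-(l^2/2)) := by ring
    _ ≤ (stdPdf t * Real.exp (l^2/2)) * Real.exp (-(l^2/2)) :=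
        mul_le_mul_of_nonneg_right hmain (Real.exp_pos _).le
    _ = stdPdf t := by rw [mul_assoc, ← Real.exp_add]; simp

lemma Mi_ge_self {t : ℝ} (ht : 0 < t) : t ≤ Mi t := by
  have h := key_bound ht
  have : (0:ℝ) ≤ 5/16 * min 1 (1/t) := by positivity
  linarith

lemma Mi_ge_stdPdf (t : ℝ) : stdPdf t ≤ Mi t := by
  rw [Mi, le_div_iff₀ (Gt_pos t)]
  exact mul_le_of_le_one_right (stdPdf_pos t).le (Gt_le_one t)

lemma numeric_bound : (5:ℝ)/32 < Real.exp (-(1/2)) / Real.sqrt (2 * Real.pi) := by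
  have hsq : Real.sqrt (2 * Real.pi) < 2.51 := by
    rw [show (2.51:ℝ) = Real.sqrt (2.51^2) by rw [Real.sqrt_sq]; norm_num]
    apply Real.sqrt_lt_sqrt (by positivity)
    nlinarith [Real.pi_lt_d2]
  have he1 : Real.exp (1/2) < 5/3 := by
    have h : Real.exp (1/2) * Real.exp (1/2) = Real.exp 1 := by
      rw [← Real.exp_add]; norm_num
    nlinarith [Real.exp_one_lt_d9, Real.exp_pos (1/2 : ℝ)]
  have he2 : (3:ℝ)/5 < Real.exp (-(1/2)) := by
    have h : Real.exp (1/2) * Real.exp (-(1/2)) = 1 := by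
      rw [← Real.exp_add]; norm_num
    nlinarith [Real.exp_pos (-(1/2) : ℝ), Real.exp_pos (1/2 : ℝ)]
  rw [lt_div_iff₀ (Real.sqrt_pos.2 (by positivity))]
  nlinarith [Real.sqrt_nonneg (2 * Real.pi)]

lemma stdPdf_ge_of_abs_le {t : ℝ} (h : t^2 ≤ 1) :
    Real.exp (-(1/2)) / Real.sqrt (2 * Real.pi) ≤ stdPdf t := by
  rw [stdPdf, div_le_div_iff₀ (by positivity) (Real.sqrt_pos.2 (by positivity))]
  apply mul_le_mul_of_nonneg_right ?_ (Real.sqrt_nonneg _)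
  apply Real.exp_le_exp.2
  nlinarith

lemma P1 {s t X : ℝ} (hs : 0 < s) (hst : s < t) (hX : s ≤ X) :
    (5:ℝ)/32 * min 1 (1/X) < Mi t - s := by
  have hX0 : 0 < X := lt_of_lt_of_le hs hX
  have hmin_le : min 1 (1/X) ≤ min 1 (1/s) :=
    min_le_min le_rfl (one_div_le_one_div_of_le hs hX)
  have hmin_nonneg : (0:ℝ) ≤ min 1 (1/X) := le_min zero_le_one (by positivity)
  have hmin1 : min 1 (1/X) ≤ 1 := min_le_left _ _
  have ht0 : 0 < t := hs.trans hst
  rcases le_or_gt t 1 with h1 | h1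
  · have hk := key_bound ht0
    have hm : min 1 (1/t) = 1 := min_eq_left (by rw [le_div_iff₀ ht0]; linarith)
    rw [hm] at hk
    nlinarith
  · rcases le_or_gt t (2*s) with h2 | h2
    · have hk := key_bound ht0
      have hm : min 1 (1/t) = 1/t := min_eq_right (by rw [div_le_one ht0]; linarith)
      rw [hm] at hk
      have hinv : 1/(2*s) ≤ 1/t := one_div_le_one_div_of_le ht0 h2
      have hs' : min 1 (1/s) ≤ 1/s := min_le_right _ _
      have : (5:ℝ)/32 * min 1 (1/X) ≤ 5/32 * (1/s) := by nlinarith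
      have h58 : (5:ℝ)/32 * (1/s) = 5/16 * (1/(2*s)) := by field_simp; ring
      nlinarith
    · have h0 := Mi_ge_self ht0
      nlinarith

lemma P2 {s t : ℝ} (hs : s < 0) (hst : s < t) : (5:ℝ)/32 < Mi t - s := by
  rcases le_or_gt (1/2 : ℝ) t with h1 | h1
  · have h0 := Mi_ge_self (by linarith : (0:ℝ) < t)
    linarith
  · rcases le_or_gt (-1 : ℝ) t with h2 | h2
    · have hphi : Real.exp (-(1/2)) / Real.sqrt (2 * Real.pi) ≤ stdPdf t := by
        apply stdPdf_ge_of_abs_le; nlinarith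
      have := Mi_ge_stdPdf t
      have := numeric_bound
      linarith
    · have := Mi_pos t
      linarith


/-- **Gap between the posterior mean and the cutoff (ternary case).** There is a
universal constant `C_l > 0` such that for every `ε > 0`, `x ≠ 0`, `m ∈ [-1, 1]`
with `x * m ≠ 0`, and message `a ∈ {-1, 1}`, with `Z` the truncated standard normal
mean above `-x*m + ε` when `a = 1` and below `-x*m - ε` when `a = -1`: if
`sgn (x*m) * a < 0` then `C_l * min 1 (1/|x|) < a * (Z + x*m)`, and if
`sgn (x*m) * a > 0` then `C_l < a * (Z + x*m)`. -/
theorem ternary_posterior_mean_gap :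
    ∃ Cl : ℝ, 0 < Cl ∧
      ∀ ε x m a : ℝ, 0 < ε → x ≠ 0 → -1 ≤ m → m ≤ 1 → x * m ≠ 0 → (a = 1 ∨ a = -1) →
        (sgn (x * m) * a < 0 →
          Cl * min 1 (1 / |x|) <
            a * ((if a = 1 then truncMeanAbove (-(x * m) + ε)
                  else truncMeanBelow (-(x * m) - ε)) + x * m)) ∧
        (0 < sgn (x * m) * a →
          Cl <
            a * ((if a = 1 then truncMeanAbove (-(x * m) + ε)
                  else truncMeanBelow (-(x * m) - ε)) + x * m)) := by
  refine ⟨5/32, by norm_num, ?_⟩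
  intro ε x m a hε hx hm1 hm2 hc ha
  set c := x * m with hcdef
  have hcabs : |c| ≤ |x| := by
    rw [hcdef, abs_mul]
    calc |x| * |m| ≤ |x| * 1 :=
          mul_le_mul_of_nonneg_left (abs_le.2 ⟨hm1, hm2⟩) (abs_nonneg x)
      _ = |x| := mul_one _
  rcases ha with rfl | rfl
  · simp only [eq_self_iff_true, if_true]
    have hZ : truncMeanAbove (-c + ε) = Mi (-c + ε) := by
      rw [truncMeanAbove, momentIoi, Mi]
    constructor
    · intro hsgn
      have hcneg : c < 0 := by
        by_contra h
        push_neg at h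
        have h0 : 0 < c := lt_of_le_of_ne h (Ne.symm hc)
        rw [sgn, if_pos h0] at hsgn
        norm_num at hsgn
      rw [hZ]
      have hP := P1 (s := -c) (t := -c + ε) (X := |x|) (by linarith) (by linarith)
        (by rw [abs_of_neg hcneg] at hcabs; linarith)
      have he : (1:ℝ) * (Mi (-c + ε) + c) = Mi (-c + ε) - (-c) := by ring
      rw [he]
      exact hP
    · intro hsgn
      have hcpos : 0 < c := by
        by_contra h
        push_neg at h
        rw [sgn, if_neg (not_lt.2 h)] at hsgn
        norm_num at hsgn
      rw [hZ]
      have hP := P2 (s := -c) (t := -c + ε) (by linarith) (by linarith)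
      have he : (1:ℝ) * (Mi (-c + ε) + c) = Mi (-c + ε) - (-c) := by ring
      rw [he]
      exact hP
  · simp only [if_neg (by norm_num : (-1:ℝ) ≠ 1)]
    have hZ : truncMeanBelow (-c - ε) = -Mi (c + ε) := by
      rw [show -c - ε = -(c + ε) by ring, truncMeanBelow, momentIio, cdf_symm, stdPdf_neg,
        Mi, neg_div]
    constructor
    · intro hsgn
      have hcpos : 0 < c := by
        by_contra h
        push_neg at h
        rw [sgn, if_neg (not_lt.2 h)] at hsgn
        norm_num at hsgn
      rw [hZ]
      have hP := P1 (s := c) (t := c + ε) (X := |x|) hcpos (by linarith)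
        (by rw [abs_of_pos hcpos] at hcabs; linarith)
      have he : (-1:ℝ) * (-Mi (c + ε) + c) = Mi (c + ε) - c := by ring
      rw [he]
      exact hP
    · intro hsgn
      have hcneg : c < 0 := by
        by_contra h
        push_neg at h
        have h0 : 0 < c := lt_of_le_of_ne h (Ne.symm hc)
        rw [sgn, if_pos h0] at hsgn
        norm_num at hsgn
      rw [hZ]
      have hP := P2 (s := c) (t := c + ε) hcneg (by linarith)
      have he : (-1:ℝ) * (-Mi (c + ε) + c) = Mi (c + ε) - c := by ring
      rw [he]
      exact hP


end
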